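/- Let A and S be p×p real positive definite matrices with AS = SA, and let n > 0 be a real number. Then the matrix X̂ = AS/n is positive definite, its positive semidefinite square root is X̂^{1/2} = (1/√n)·A^{1/2}S^{1/2}, and the mode equation A X̂^{-1/2} S + S X̂^{-1/2} A = 2n X̂^{1/2} holds, where X̂^{-1/2} denotes the inverse of X̂^{1/2}. -/

import Mathlib

open Matrix

open scoped ComplexOrder in
/-- The positive semidefinite square root of a positive semidefinite matrix (the definition
`Matrix.PosSemidef.sqrt` of the older Mathlib, which has since been removed). -/
noncomputable def Matrix.PosSemidef.sqrt {n : Type*} [Fintype n] [DecidableEq n] {𝕜 : Type*}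
    [RCLike 𝕜] {A : Matrix n n 𝕜} (hA : A.PosSemidef) : Matrix n n 𝕜 :=
  hA.1.eigenvectorUnitary.1 * diagonal ((↑) ∘ (√·) ∘ hA.1.eigenvalues) *
    (star hA.1.eigenvectorUnitary : Matrix n n 𝕜)

open scoped MatrixOrder in
theorem Matrix.PosSemidef.sqrt_eq_cfcSqrt {n : Type*} [Fintype n] [DecidableEq n]
    {A : Matrix n n ℝ} (hA : A.PosSemidef) : hA.sqrt = CFC.sqrt A := by
  rw [CFC.sqrt_eq_real_sqrt A hA.nonneg, cfcₙ_eq_cfc, hA.1.cfc_eq, IsHermitian.cfc, Unitary.conjStarAlgAut_apply]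
  rfl

open scoped MatrixOrder in
theorem Matrix.PosSemidef.sqrt_mul_self {n : Type*} [Fintype n] [DecidableEq n]
    {A : Matrix n n ℝ} (hA : A.PosSemidef) : hA.sqrt * hA.sqrt = A := by
  rw [hA.sqrt_eq_cfcSqrt]
  exact CFC.sqrt_mul_sqrt_self A hA.nonneg

open scoped MatrixOrder in
theorem Matrix.PosSemidef.posSemidef_sqrt {n : Type*} [Fintype n] [DecidableEq n]
    {A : Matrix n n ℝ} (hA : A.PosSemidef) : hA.sqrt.PosSemidef := by
  rw [hA.sqrt_eq_cfcSqrt]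
  exact (CFC.sqrt_nonneg A).posSemidef

open scoped MatrixOrder in
theorem Matrix.PosSemidef.eq_sqrt_of_sq_eq {n : Type*} [Fintype n] [DecidableEq n]
    {A B : Matrix n n ℝ} (hB : B.PosSemidef) (hA : A.PosSemidef) (h : B ^ 2 = A) :
    B = hA.sqrt := by
  rw [hA.sqrt_eq_cfcSqrt]
  exact ((CFC.sqrt_eq_iff A B hA.nonneg hB.nonneg).mpr (by rw [← h, sq])).symm

theorem Matrix.IsHermitian.star_mul_self_mul_eq_diagonal {n : Type*} [Fintype n] [DecidableEq n]
    {A : Matrix n n ℝ} (hA : A.IsHermitian) :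
    star (hA.eigenvectorUnitary : Matrix n n ℝ) * A * (hA.eigenvectorUnitary : Matrix n n ℝ)
      = diagonal (RCLike.ofReal ∘ hA.eigenvalues) := by
  rw [← hA.conjStarAlgAut_star_eigenvectorUnitary, Unitary.conjStarAlgAut_star_apply]

private lemma commute_diagonal_comp {p : ℕ} (d : Fin p → ℝ) (f : ℝ → ℝ)
    (B : Matrix (Fin p) (Fin p) ℝ) (h : diagonal d * B = B * diagonal d) :
    diagonal (f ∘ d) * B = B * diagonal (f ∘ d) := by
  ext i j
  have h' : d i * B i j = B i j * d j := by
    have := congrFun (congrFun h i) j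
    rwa [diagonal_mul, mul_diagonal] at this
  rw [diagonal_mul, mul_diagonal, Function.comp_apply, Function.comp_apply]
  rcases eq_or_ne (d i) (d j) with he | he
  · rw [he, mul_comm]
  · have hb : B i j = 0 := by
      have h2 : (d i - d j) * B i j = 0 := by linear_combination h'
      rcases mul_eq_zero.mp h2 with h3 | h3
      · exact absurd (sub_eq_zero.mp h3) he
      · exact h3
    simp [hb]

private lemma sqrt_commute {p : ℕ} {A B : Matrix (Fin p) (Fin p) ℝ}
    (hA : A.PosSemidef) (h : A * B = B * A) : hA.sqrt * B = B * hA.sqrt := by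
  set V : Matrix (Fin p) (Fin p) ℝ := (hA.1.eigenvectorUnitary : Matrix (Fin p) (Fin p) ℝ) with hVdef
  have hV1 : star V * V = 1 := Unitary.coe_star_mul_self hA.1.eigenvectorUnitary
  have hV2 : V * star V = 1 := Unitary.coe_mul_star_self hA.1.eigenvectorUnitary
  set d := hA.1.eigenvalues with hddef
  have hd : star V * A * V = diagonal (RCLike.ofReal ∘ d) := hA.1.star_mul_self_mul_eq_diagonal
  have key : ∀ X Y : Matrix (Fin p) (Fin p) ℝ,
      (star V * X * V) * (star V * Y * V) = star V * (X * Y) * V := by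
    intro X Y
    have h5 : V * (star V * (Y * V)) = Y * V := by rw [← mul_assoc, hV2, one_mul]
    simp only [mul_assoc, h5]
  have hcomm' : diagonal (RCLike.ofReal ∘ d) * (star V * B * V)
      = (star V * B * V) * diagonal (RCLike.ofReal ∘ d) := by
    rw [← hd]
    rw [key, key, h]
  have h2 := commute_diagonal_comp (RCLike.ofReal ∘ d) Real.sqrt _ hcomm'
  have hfe : Real.sqrt ∘ (RCLike.ofReal ∘ d) = (RCLike.ofReal ∘ Real.sqrt ∘ d : Fin p → ℝ) := by
    simp [RCLike.ofReal_real_eq_id]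
  rw [hfe] at h2
  -- now unfold sqrt
  rw [Matrix.PosSemidef.sqrt]
  -- goal: V * diagonal (...) * star V * B = B * (V * diagonal (...) * star V)
  have hB' : star V * (B * V) = (star V * B * V) := by rw [← mul_assoc]
  calc (V : Matrix (Fin p) (Fin p) ℝ) * diagonal (RCLike.ofReal ∘ Real.sqrt ∘ d) * star V * B
      = V * diagonal (RCLike.ofReal ∘ Real.sqrt ∘ d) * ((star V * B * V) * star V) := by
        rw [mul_assoc (star V * B) V (star V), hV2, mul_one, mul_assoc (V * diagonal (RCLike.ofReal ∘ Real.sqrt ∘ d)) (star V) B]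
    _ = V * ((star V * B * V) * diagonal (RCLike.ofReal ∘ Real.sqrt ∘ d)) * star V := by
        rw [mul_assoc V (diagonal (RCLike.ofReal ∘ Real.sqrt ∘ d)), ← mul_assoc (diagonal (RCLike.ofReal ∘ Real.sqrt ∘ d)), h2, ← mul_assoc, ← mul_assoc]
    _ = B * (V * diagonal (RCLike.ofReal ∘ Real.sqrt ∘ d) * star V) := by
        simp only [← mul_assoc]
        rw [hV2, one_mul]

private lemma inv_comm' {p : ℕ} {a B : Matrix (Fin p) (Fin p) ℝ}
    (hU : IsUnit a.det) (h : a * B = B * a) : a⁻¹ * B = B * a⁻¹ := by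
  calc a⁻¹ * B = a⁻¹ * B * (a * a⁻¹) := by rw [Matrix.mul_nonsing_inv a hU, mul_one]
    _ = a⁻¹ * (B * a) * a⁻¹ := by simp only [mul_assoc]
    _ = a⁻¹ * (a * B) * a⁻¹ := by rw [h]
    _ = (a⁻¹ * a) * (B * a⁻¹) := by simp only [mul_assoc]
    _ = B * a⁻¹ := by rw [Matrix.nonsing_inv_mul a hU, one_mul]

private lemma psd_mul {p : ℕ} {a s : Matrix (Fin p) (Fin p) ℝ}
    (ha : a.PosSemidef) (hs : s.PosSemidef) (h : a * s = s * a) : (a * s).PosSemidef := by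
  have hrs : ha.sqrt * s = s * ha.sqrt := sqrt_commute ha h
  have haseq : ha.sqrt * s * ha.sqrtᴴ = a * s := by
    rw [ha.posSemidef_sqrt.1]
    calc ha.sqrt * s * ha.sqrt = ha.sqrt * (s * ha.sqrt) := by rw [mul_assoc]
      _ = ha.sqrt * (ha.sqrt * s) := by rw [← hrs]
      _ = ha.sqrt * ha.sqrt * s := by rw [mul_assoc]
      _ = a * s := by rw [ha.sqrt_mul_self]
  exact haseq ▸ hs.mul_mul_conjTranspose_same ha.sqrt

private lemma main_core {p : ℕ} (A S a s : Matrix (Fin p) (Fin p) ℝ) (n : ℝ) (hn : 0 < n)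
    (hA : A.PosDef) (hS : S.PosDef)
    (ha2 : a * a = A) (hs2 : s * s = S) (haH : aᴴ = a) (hsH : sᴴ = s)
    (has : a * s = s * a) (haS : a * S = S * a)
    (hasPSD : (a * s).PosSemidef) :
    ((1 / n) • (A * S)).PosDef ∧
    ∀ h : ((1 / n) • (A * S)).PosSemidef,
      h.sqrt = (1 / Real.sqrt n) • (a * s) ∧
      A * h.sqrt⁻¹ * S + S * h.sqrt⁻¹ * A = (2 * n) • h.sqrt := by
  have hasH : (a * s)ᴴ = a * s := hasPSD.1
  have hsq : (a * s) * (a * s) = A * S := by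
    calc (a * s) * (a * s) = a * (s * a) * s := by simp only [mul_assoc]
      _ = a * (a * s) * s := by rw [← has]
      _ = (a * a) * (s * s) := by simp only [mul_assoc]
      _ = A * S := by rw [ha2, hs2]
  have hdeta : IsUnit a.det := by
    have h1 : a.det * a.det = A.det := by rw [← Matrix.det_mul, ha2]
    have := hA.det_pos
    refine isUnit_iff_ne_zero.mpr fun h0 => ?_
    rw [h0, mul_zero] at h1; linarith
  have hdets : IsUnit s.det := by
    have h1 : s.det * s.det = S.det := by rw [← Matrix.det_mul, hs2]
    have := hS.det_pos
    refine isUnit_iff_ne_zero.mpr fun h0 => ?_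
    rw [h0, mul_zero] at h1; linarith
  have hdetas : IsUnit (a * s).det := by rw [Matrix.det_mul]; exact hdeta.mul hdets
  have hXpd : ((1 / n) • (A * S)).PosDef := by
    refine posDef_iff_dotProduct_mulVec.mpr ⟨?_, fun x hx => ?_⟩
    · show ((1 / n) • (A * S))ᴴ = (1 / n) • (A * S)
      rw [conjTranspose_smul, ← hsq, star_trivial]
      rw [conjTranspose_mul, hasH]
    · rw [smul_mulVec, dotProduct_smul, smul_eq_mul]
      have h1 : (0:ℝ) < 1 / n := by positivity
      refine mul_pos h1 ?_
      rw [← hsq, ← hasH, ← mulVec_mulVec, dotProduct_mulVec, vecMul_conjTranspose, star_star]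
      rw [hasH, dotProduct_star_self_pos_iff]
      intro h0
      apply hx
      have h3 : (a * s)⁻¹ *ᵥ ((a * s) *ᵥ x) = 0 := by rw [h0, mulVec_zero]
      rwa [mulVec_mulVec, Matrix.nonsing_inv_mul _ hdetas, one_mulVec] at h3
  refine ⟨hXpd, fun h => ?_⟩
  have hsn : Real.sqrt n ≠ 0 := (Real.sqrt_pos.mpr hn).ne'
  have hC : ((1 / Real.sqrt n) • (a * s)).PosSemidef := by
    refine PosSemidef.of_dotProduct_mulVec_nonneg ?_ fun x => ?_
    · show ((1 / Real.sqrt n) • (a * s))ᴴ = (1 / Real.sqrt n) • (a * s)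
      rw [conjTranspose_smul, star_trivial, hasH]
    · rw [smul_mulVec, dotProduct_smul, smul_eq_mul]
      exact mul_nonneg (by positivity) (hasPSD.dotProduct_mulVec_nonneg x)
  have hCsq : ((1 / Real.sqrt n) • (a * s)) ^ 2 = (1 / n) • (A * S) := by
    rw [pow_two, smul_mul_assoc, mul_smul_comm, smul_smul, hsq]
    congr 1
    rw [div_mul_div_comm, one_mul, Real.mul_self_sqrt hn.le]
  have hsqrt : h.sqrt = (1 / Real.sqrt n) • (a * s) := (hC.eq_sqrt_of_sq_eq h hCsq).symm
  refine ⟨hsqrt, ?_⟩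
  have hainvS : a⁻¹ * S = S * a⁻¹ := inv_comm' hdeta haS
  have hsainv : s * a⁻¹ = a⁻¹ * s := (inv_comm' hdeta has).symm
  have hQinv : h.sqrt⁻¹ = Real.sqrt n • (s⁻¹ * a⁻¹) := by
    apply Matrix.inv_eq_right_inv
    rw [hsqrt, smul_mul_assoc, mul_smul_comm, smul_smul]
    have hc : 1 / Real.sqrt n * Real.sqrt n = 1 := by field_simp
    have hm : (a * s) * (s⁻¹ * a⁻¹) = 1 := by
      calc (a * s) * (s⁻¹ * a⁻¹) = a * (s * s⁻¹) * a⁻¹ := by simp only [mul_assoc]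
        _ = 1 := by rw [Matrix.mul_nonsing_inv s hdets, mul_one, Matrix.mul_nonsing_inv a hdeta]
    rw [hc, hm, one_smul]
  have key1 : A * (s⁻¹ * a⁻¹) * S = a * s := by
    have e1 : s⁻¹ * S = s := by rw [← hs2, ← mul_assoc, Matrix.nonsing_inv_mul s hdets, one_mul]
    calc A * (s⁻¹ * a⁻¹) * S = A * s⁻¹ * (a⁻¹ * S) := by simp only [mul_assoc]
      _ = A * s⁻¹ * (S * a⁻¹) := by rw [hainvS]
      _ = A * (s⁻¹ * S) * a⁻¹ := by simp only [mul_assoc]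
      _ = A * s * a⁻¹ := by rw [e1]
      _ = a * a * (s * a⁻¹) := by rw [← ha2]; simp only [mul_assoc]
      _ = a * a * (a⁻¹ * s) := by rw [hsainv]
      _ = a * (a * a⁻¹) * s := by simp only [mul_assoc]
      _ = a * s := by rw [Matrix.mul_nonsing_inv a hdeta, mul_one]
  have key2 : S * (s⁻¹ * a⁻¹) * A = a * s := by
    have e1 : S * s⁻¹ = s := by rw [← hs2, mul_assoc, Matrix.mul_nonsing_inv s hdets, mul_one]
    have e2 : a⁻¹ * A = a := by rw [← ha2, ← mul_assoc, Matrix.nonsing_inv_mul a hdeta, one_mul]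
    calc S * (s⁻¹ * a⁻¹) * A = (S * s⁻¹) * (a⁻¹ * A) := by simp only [mul_assoc]
      _ = s * a := by rw [e1, e2]
      _ = a * s := has.symm
  rw [hQinv, hsqrt]
  rw [mul_smul_comm, smul_mul_assoc, mul_smul_comm, smul_mul_assoc, key1, key2, smul_smul,
    ← add_smul]
  congr 1
  have h2 : Real.sqrt n * Real.sqrt n = n := Real.mul_self_sqrt hn.le
  field_simp
  linarith [h2]

/-- For positive definite commuting `A`, `S` and `n > 0`, the matrix
`X̂ = AS/n` is positive definite, its positive semidefinite square root is
`(1/√n)·A^{1/2}S^{1/2}`, and `A X̂^{-1/2} S + S X̂^{-1/2} A = 2n X̂^{1/2}`,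
where `X̂^{-1/2} = (X̂^{1/2})⁻¹`. -/
theorem mode_of_commuting {p : ℕ} (A S : Matrix (Fin p) (Fin p) ℝ)
    (hA : A.PosDef) (hS : S.PosDef) (hcomm : A * S = S * A) (n : ℝ) (hn : 0 < n) :
    ((1 / n) • (A * S)).PosDef ∧
    ∀ h : ((1 / n) • (A * S)).PosSemidef,
      h.sqrt = (1 / Real.sqrt n) • (hA.posSemidef.sqrt * hS.posSemidef.sqrt) ∧
      A * h.sqrt⁻¹ * S + S * h.sqrt⁻¹ * A = (2 * n) • h.sqrt := by
  have ha := hA.posSemidef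
  have hs := hS.posSemidef
  have haS : ha.sqrt * S = S * ha.sqrt := sqrt_commute ha hcomm
  have has : ha.sqrt * hs.sqrt = hs.sqrt * ha.sqrt := (sqrt_commute hs haS.symm).symm
  exact main_core A S ha.sqrt hs.sqrt n hn hA hS ha.sqrt_mul_self hs.sqrt_mul_self
    ha.posSemidef_sqrt.1 hs.posSemidef_sqrt.1 has haS
    (psd_mul ha.posSemidef_sqrt hs.posSemidef_sqrt has)
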